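/- arXiv:2202.04047 — 5 statements merged into one kernel-verified Lean document; each statement's English description precedes it below -/
import Mathlib

section
/- Let H be a subgroup of (ℤ/mℤ)^n. Then (H^⊥)^⊥ = H. -/
/-!
If `x ∉ H`, a `ℚ/ℤ`-valued character of `(ZMod m)ⁿ ⧸ H` that is nonzero at `x` takes values in the
`m`-torsion of `ℚ/ℤ`, which is a copy of `ZMod m`; so some `f : (ZMod m)ⁿ →+ ZMod m` vanishes on `H`
but not at `x`. Such an `f` is `v ↦ ∑ i, v i * y i` with `y i = f (Pi.single i 1)`, hence `y ∈ H^⊥`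
and `⟨x, y⟩ ≠ 0`.
-/
namespace ZMod

variable {m : ℕ} [NeZero m]

/-- The `ℚ / ℤ` analogue of `ZMod.toAddCircle`: `j mod m ↦ j / m mod 1`. -/
noncomputable def toRatCircle : ZMod m →+ AddCircle (1 : ℚ) :=
  lift m ⟨AddMonoidHom.mk' (fun j ↦ ↑(j / m : ℚ)) (by simp [add_div]), by simp⟩

lemma toRatCircle_intCast (j : ℤ) : toRatCircle (j : ZMod m) = ↑(j / m : ℚ) := by
  simp [toRatCircle]

lemma toRatCircle_injective : Function.Injective (toRatCircle : ZMod m → _) := by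
  refine (injective_iff_map_eq_zero _).2 fun k hk ↦ ?_
  obtain ⟨j, rfl⟩ := intCast_surjective k
  rw [toRatCircle_intCast, AddCircle.coe_eq_zero_iff] at hk
  obtain ⟨q, hq⟩ := hk
  rw [intCast_zmod_eq_zero_iff_dvd]
  refine ⟨q, ?_⟩
  have hm : (m : ℚ) ≠ 0 := Nat.cast_ne_zero.2 (NeZero.ne m)
  rw [zsmul_one, eq_div_iff hm] at hq
  exact_mod_cast hq.symm.trans (mul_comm _ _)

lemma mem_range_toRatCircle_of_nsmul_eq_zero {w : AddCircle (1 : ℚ)} (hw : m • w = 0) :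
    w ∈ (toRatCircle : ZMod m →+ _).range := by
  obtain ⟨q, rfl⟩ := QuotientAddGroup.mk_surjective w
  rw [← AddCircle.coe_nsmul, AddCircle.coe_eq_zero_iff] at hw
  obtain ⟨j, hj⟩ := hw
  refine ⟨j, ?_⟩
  have hm : (m : ℚ) ≠ 0 := Nat.cast_ne_zero.2 (NeZero.ne m)
  rw [zsmul_one, nsmul_eq_mul] at hj
  rw [toRatCircle_intCast, hj, mul_div_cancel_left₀ _ hm]

end ZMod

theorem exists_addMonoidHom_zmod_apply_ne_zero {A : Type*} [AddCommGroup A] {m : ℕ} [NeZero m]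
    (hA : ∀ a : A, m • a = 0) {a : A} (ha : a ≠ 0) : ∃ f : A →+ ZMod m, f a ≠ 0 := by
  obtain ⟨c, hc⟩ := CharacterModule.exists_character_apply_ne_zero_of_ne_zero ha
  have hc_range (b : A) : c b ∈ (ZMod.toRatCircle : ZMod m →+ _).range :=
    ZMod.mem_range_toRatCircle_of_nsmul_eq_zero (by rw [← map_nsmul, hA, map_zero])
  let e := AddMonoidHom.ofInjective (ZMod.toRatCircle_injective (m := m))
  refine ⟨e.symm.toAddMonoidHom.comp (c.codRestrict _ hc_range), fun h ↦ hc ?_⟩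
  have h' : c.codRestrict _ hc_range a = 0 := by simpa using h
  exact congrArg Subtype.val h'

theorem exists_addMonoidHom_zmod_of_notMem {G : Type*} [AddCommGroup G] {m : ℕ} [NeZero m]
    (hG : ∀ g : G, m • g = 0) {H : AddSubgroup G} {x : G} (hx : x ∉ H) :
    ∃ f : G →+ ZMod m, (∀ h ∈ H, f h = 0) ∧ f x ≠ 0 := by
  have hQ (q : G ⧸ H) : m • q = 0 := by
    induction q using QuotientAddGroup.induction_on with
    | H g => rw [← QuotientAddGroup.mk_nsmul, hG, QuotientAddGroup.mk_zero]
  obtain ⟨f, hf⟩ := exists_addMonoidHom_zmod_apply_ne_zero hQ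
    (a := (x : G ⧸ H)) (by rwa [ne_eq, QuotientAddGroup.eq_zero_iff])
  refine ⟨f.comp (QuotientAddGroup.mk' H), fun h hh ↦ ?_, hf⟩
  simp [(QuotientAddGroup.eq_zero_iff h).2 hh]

theorem AddMonoidHom.apply_eq_sum_mul_apply_single {ι : Type*} [Fintype ι] [DecidableEq ι]
    {m : ℕ} (f : (ι → ZMod m) →+ ZMod m) (v : ι → ZMod m) :
    f v = ∑ i, v i * f (Pi.single i 1) := by
  refine ((f.toZModLinearMap m).pi_apply_eq_sum_univ v).trans (Finset.sum_congr rfl fun i _ ↦ ?_)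
  have hsingle : (fun j ↦ if i = j then 1 else 0) = (Pi.single i 1 : ι → ZMod m) := by
    ext j
    rw [Pi.single_comm, Pi.single_apply]
  rw [hsingle, smul_eq_mul]
  rfl

theorem stmt_4_general (m n : ℕ) [NeZero m]
    (H : AddSubgroup (Fin n → ZMod m)) (x : Fin n → ZMod m) :
    (∀ y : Fin n → ZMod m, (∀ h ∈ H, ∑ i, h i * y i = 0) → ∑ i, x i * y i = 0)
      ↔ x ∈ H := by
  refine ⟨fun hx ↦ ?_, fun hxH y hy ↦ hy x hxH⟩
  by_contra hxH
  have hG (v : Fin n → ZMod m) : m • v = 0 := by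
    ext i
    simp only [Pi.smul_apply, nsmul_eq_mul, ZMod.natCast_self, zero_mul, Pi.zero_apply]
  obtain ⟨f, hfH, hfx⟩ := exists_addMonoidHom_zmod_of_notMem hG hxH
  have hf (v : Fin n → ZMod m) : f v = ∑ i, v i * f (Pi.single i 1) :=
    f.apply_eq_sum_mul_apply_single v
  exact hfx <| (hf x).trans <| hx _ fun h hh ↦ (hf h).symm.trans (hfH h hh)

theorem stmt_4 (m n : ℕ) [NeZero m] (hn : 1 ≤ n)
    (H : AddSubgroup (Fin n → ZMod m)) (x : Fin n → ZMod m) :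
    (∀ y : Fin n → ZMod m, (∀ h ∈ H, ∑ i, h i * y i = 0) → ∑ i, x i * y i = 0)
      ↔ x ∈ H :=
  stmt_4_general m n H x
end

section
/- Let H be a subgroup of (ℤ/mℤ)^n and u ∈ (ℤ/mℤ)^n. Then the map μ_u : H^⊥ → ℤ/mℤ given by μ_u(y) = ⟨u,y⟩ is the zero map if and only if u ∈ H. -/
/-- An injective-ish hom `ZMod k →+ ZMod m` when `k ∣ m`: nonzero elements map to nonzero. -/
lemma aux_exists_hom_zmod (m k : ℕ) [NeZero m] [NeZero k] (hdvd : k ∣ m)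
    {x : ZMod k} (hx : x ≠ 0) :
    ∃ g : ZMod k →+ ZMod m, g x ≠ 0 := by
  have hm : m ≠ 0 := NeZero.ne m
  have hk : k ≠ 0 := NeZero.ne k
  refine ⟨ZMod.lift k ⟨(zmultiplesHom (ZMod m)) ((m / k : ℕ) : ZMod m), ?_⟩, ?_⟩
  · show (k : ℤ) • ((m / k : ℕ) : ZMod m) = 0
    have : ((k * (m / k) : ℕ) : ZMod m) = ((m : ℕ) : ZMod m) := by
      rw [Nat.mul_div_cancel' hdvd]
    rw [zsmul_eq_mul, Int.cast_natCast, ← Nat.cast_mul, this, ZMod.natCast_self]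
  · have hxval : ((x.val : ℤ) : ZMod k) = x := by
      rw [Int.cast_natCast, ZMod.natCast_zmod_val]
    rw [← hxval, ZMod.lift_coe]
    show (x.val : ℤ) • ((m / k : ℕ) : ZMod m) ≠ 0
    rw [zsmul_eq_mul, Int.cast_natCast, ← Nat.cast_mul]
    rw [Ne, ZMod.natCast_eq_zero_iff]
    intro hcontra
    have h1 : 0 < x.val := Nat.pos_of_ne_zero (fun h => hx (by
      have := ZMod.natCast_zmod_val x; rw [h] at this; simpa using this.symm))
    have h2 : x.val < k := ZMod.val_lt x
    have hq : 0 < m / k := Nat.div_pos (Nat.le_of_dvd (Nat.pos_of_ne_zero hm) hdvd)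
      (Nat.pos_of_ne_zero hk)
    have hlt : x.val * (m / k) < m := by
      calc x.val * (m / k) < k * (m / k) := by
            exact (Nat.mul_lt_mul_right hq).mpr h2
        _ = m := Nat.mul_div_cancel' hdvd
    have hpos : 0 < x.val * (m / k) := Nat.mul_pos h1 hq
    exact Nat.not_dvd_of_pos_of_lt hpos hlt hcontra

/-- Homs to `ZMod m` separate points of a finite abelian group killed by `m`. -/
lemma aux_sep (m : ℕ) [NeZero m] (A : Type*) [AddCommGroup A] [Finite A]
    (hA : ∀ a : A, m • a = 0) {a : A} (ha : a ≠ 0) :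
    ∃ φ : A →+ ZMod m, φ a ≠ 0 := by
  classical
  obtain ⟨ι, _, k, hk, ⟨e⟩⟩ := AddCommGroup.equiv_directSum_zmod_of_finite' A
  have hea : e a ≠ 0 := by
    intro h
    exact ha (by simpa using congrArg e.symm h)
  obtain ⟨i, hi⟩ : ∃ i, e a i ≠ 0 := by
    by_contra hcon
    push_neg at hcon
    exact hea (DFinsupp.ext hcon)
  have : NeZero (k i) := ⟨by have := hk i; omega⟩
  have hdvd : k i ∣ m := by
    have h1 : m • e.symm (DirectSum.of (fun j => ZMod (k j)) i 1) = 0 := hA _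
    have h2 : m • DirectSum.of (fun j => ZMod (k j)) i 1 = 0 := by
      have h2' := congrArg e h1
      rwa [map_nsmul, map_zero, AddEquiv.apply_symm_apply] at h2'
    have h3 : m • ((DirectSum.of (fun j => ZMod (k j)) i 1) i) = 0 := by
      rw [← DFinsupp.smul_apply, h2]; rfl
    rw [DirectSum.of_eq_same] at h3
    rw [← ZMod.natCast_eq_zero_iff]
    simpa [nsmul_eq_mul] using h3
  obtain ⟨g, hg⟩ := aux_exists_hom_zmod m (k i) hdvd hi
  refine ⟨(g.comp (DFinsupp.evalAddMonoidHom i)).comp e.toAddMonoidHom, ?_⟩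
  exact hg

theorem stmt_5 (m n : ℕ) [NeZero m] (hn : 1 ≤ n)
    (H : AddSubgroup (Fin n → ZMod m)) (u : Fin n → ZMod m) :
    (∀ y : Fin n → ZMod m, (∀ x ∈ H, ∑ i, x i * y i = 0) → ∑ i, u i * y i = 0)
      ↔ u ∈ H := by
  constructor
  · intro h
    by_contra hu
    -- work in the quotient
    set Q := (Fin n → ZMod m) ⧸ H
    have hQfin : Finite Q := Quotient.finite _
    have hQm : ∀ q : Q, m • q = 0 := by
      intro q
      obtain ⟨x, rfl⟩ := QuotientAddGroup.mk_surjective q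
      rw [show ((x : Q)) = QuotientAddGroup.mk' H x from rfl, ← map_nsmul]
      convert map_zero (QuotientAddGroup.mk' H)
      funext i
      simp [nsmul_eq_mul]
    have hu' : (QuotientAddGroup.mk' H u : Q) ≠ 0 := by
      rw [QuotientAddGroup.mk'_apply, Ne, QuotientAddGroup.eq_zero_iff]
      exact hu
    obtain ⟨φ, hφ⟩ := aux_sep m Q hQm hu'
    set ψ : (Fin n → ZMod m) →+ ZMod m := φ.comp (QuotientAddGroup.mk' H)
    have hψH : ∀ x ∈ H, ψ x = 0 := by
      intro x hx
      simp only [ψ, AddMonoidHom.comp_apply]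
      rw [show QuotientAddGroup.mk' H x = 0 from
        (QuotientAddGroup.eq_zero_iff x).mpr hx, map_zero]
    set y : Fin n → ZMod m := fun i => ψ (Pi.single i (1 : ZMod m))
    have key : ∀ v : Fin n → ZMod m, ∑ i, v i * y i = ψ v := by
      intro v
      conv_rhs => rw [← Finset.univ_sum_single v]
      rw [map_sum]
      refine Finset.sum_congr rfl fun i _ => ?_
      have h1 : Pi.single i (v i) = ((v i).val • Pi.single i (1 : ZMod m) : Fin n → ZMod m) := by
        funext j
        by_cases hj : j = i
        · subst hj
          simp [Pi.single_apply, nsmul_eq_mul, ZMod.natCast_zmod_val]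
        · simp [Pi.single_apply, hj]
      rw [h1, map_nsmul]
      simp [y, nsmul_eq_mul, ZMod.natCast_zmod_val]
    have := h y (fun x hx => by rw [key x]; exact hψH x hx)
    rw [key u] at this
    exact hφ this
  · intro hu y hy
    exact hy u hu
end

section
/- Given integers z₁, z₂ and a positive integer m with gcd(z₁, z₂, m) = 1, there exists an integer u with 0 ≤ u < m such that gcd(u·z₁ + z₂, m) = 1. -/
/-!
Take `u` to be the product of the primes `p ∣ m` with `p ∤ z₂`. For a prime `p ∣ m`: if `p ∤ z₂`
then `p ∣ u`, so `p ∤ u z₁ + z₂`; if `p ∣ z₂` then `p ∤ u` and `p ∤ z₁` (as `gcd(z₁, z₂, m) = 1`),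
so again `p ∤ u z₁ + z₂`. Reducing `u` modulo `m` does not change `gcd(u z₁ + z₂, m)`.
-/

theorem not_dvd_mul_add_of_dvd_iff_not_dvd {R : Type*} [CommRing R] {p a b u : R}
    (hp : Prime p) (hab : ¬ (p ∣ a ∧ p ∣ b)) (hu : p ∣ u ↔ ¬ p ∣ b) : ¬ p ∣ u * a + b := by
  intro h
  by_cases hb : p ∣ b
  · have hua : p ∣ u * a := (dvd_add_left hb).1 h
    rcases hp.dvd_or_dvd hua with hpu | hpa
    · exact hu.1 hpu hb
    · exact hab ⟨hpa, hb⟩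
  · exact hb ((dvd_add_right (dvd_mul_of_dvd_left (hu.2 hb) a)).1 h)

theorem Int.gcd_eq_one_of_forall_prime_dvd {a b : ℤ}
    (H : ∀ p : ℕ, p.Prime → (p : ℤ) ∣ b → ¬ (p : ℤ) ∣ a) : Int.gcd a b = 1 :=
  Nat.coprime_of_dvd fun p hp hpa hpb ↦ H p hp (Int.natCast_dvd.2 hpb) (Int.natCast_dvd.2 hpa)

theorem Nat.prime_dvd_prod_filter_primeFactors_iff {m p : ℕ} (hm : m ≠ 0) (hp : p.Prime)
    (hpm : p ∣ m) (P : ℕ → Prop) [DecidablePred P] :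
    p ∣ ∏ q ∈ m.primeFactors.filter P, q ↔ P p := by
  have hprime : ∀ q ∈ m.primeFactors.filter P, q.Prime :=
    fun q hq ↦ Nat.prime_of_mem_primeFactors (Finset.mem_filter.1 hq).1
  have hprod : ∏ q ∈ m.primeFactors.filter P, q ≠ 0 :=
    Finset.prod_ne_zero_iff.2 fun q hq ↦ (hprime q hq).ne_zero
  calc p ∣ ∏ q ∈ m.primeFactors.filter P, q
      ↔ p ∈ (∏ q ∈ m.primeFactors.filter P, q).primeFactors := by
        simp only [Nat.mem_primeFactors, hp, hprod, true_and, ne_eq, not_false_eq_true, and_true]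
    _ ↔ P p := by
        rw [Nat.primeFactors_prod hprime, Finset.mem_filter]
        simp only [hp.mem_primeFactors hpm hm, true_and]

theorem Int.gcd_emod_mul_add (u a b m : ℤ) : Int.gcd (u % m * a + b) m = Int.gcd (u * a + b) m := by
  rw [← Int.gcd_emod, ← Int.gcd_emod (u * a + b)]
  simp [Int.add_emod, Int.mul_emod]

theorem Int.exists_gcd_natCast_mul_add_eq_one {a b : ℤ} {m : ℕ} (hm : m ≠ 0)
    (h : Int.gcd (Int.gcd a b) m = 1) : ∃ u : ℕ, Int.gcd (u * a + b) m = 1 := by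
  classical
  refine ⟨∏ q ∈ m.primeFactors.filter (fun q : ℕ ↦ ¬ (q : ℤ) ∣ b), q,
    Int.gcd_eq_one_of_forall_prime_dvd fun p hp hpm ↦ ?_⟩
  refine not_dvd_mul_add_of_dvd_iff_not_dvd (Nat.prime_iff_prime_int.1 hp) ?_ ?_
  · rintro ⟨hpa, hpb⟩
    have hp_dvd_gcd : p ∣ Int.gcd (Int.gcd a b) m :=
      Int.dvd_gcd (Int.natCast_dvd_natCast.2 (Int.dvd_gcd hpa hpb)) hpm
    exact hp.one_lt.ne' (Nat.dvd_one.1 (h ▸ hp_dvd_gcd))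
  · rw [Int.natCast_dvd_natCast]
    exact Nat.prime_dvd_prod_filter_primeFactors_iff hm hp (Int.natCast_dvd_natCast.1 hpm) _

theorem stmt_8 (z₁ z₂ : ℤ) (m : ℕ) (hm : 0 < m)
    (h : Int.gcd (Int.gcd z₁ z₂) m = 1) :
    ∃ u : ℤ, 0 ≤ u ∧ u < m ∧ Int.gcd (u * z₁ + z₂) m = 1 := by
  obtain ⟨u, hu⟩ := Int.exists_gcd_natCast_mul_add_eq_one hm.ne' h
  have hm' : (0 : ℤ) < m := by exact_mod_cast hm
  exact ⟨u % m, Int.emod_nonneg _ hm'.ne', Int.emod_lt_of_pos _ hm',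
    (Int.gcd_emod_mul_add u z₁ z₂ m).trans hu⟩
end

section
/- Given integers z₁, ..., z_s (s ≥ 1) and a positive integer m, there exist integers u₁, ..., u_{s−1} such that gcd(u₁z₁ + ⋯ + u_{s−1}z_{s−1} + z_s, m) = gcd(z₁, ..., z_s, m). -/
/-- Key coprimality lemma: if `gcd a b = 1`, some `u*a+b` is coprime to `m`. -/
lemma key_coprime (m : ℕ) (hm : m ≠ 0) (a b : ℤ) (hab : Int.gcd a b = 1) :
    ∃ u : ℤ, Int.gcd (u * a + b) m = 1 := by
  classical
  set k : ℕ := (m.primeFactors.filter fun p : ℕ => ¬ (p : ℤ) ∣ b).prod id with hk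
  refine ⟨(k : ℤ), ?_⟩
  rw [Nat.eq_one_iff_not_exists_prime_dvd]
  intro p hp hpg
  have hpm : p ∣ m := hpg.trans (Nat.gcd_dvd_right _ _)
  have hpsum : (p : ℤ) ∣ (k : ℤ) * a + b :=
    Int.dvd_natAbs.mp (Int.natCast_dvd_natCast.mpr (hpg.trans (Nat.gcd_dvd_left _ _)))
  have hppz : Prime (p : ℤ) := Nat.prime_iff_prime_int.mp hp
  by_cases hpb : (p : ℤ) ∣ b
  · -- p ∤ k, hence p ∣ a, contradiction with gcd a b = 1
    have hpk : ¬ p ∣ k := by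
      intro hdvd
      rw [hk] at hdvd
      obtain ⟨q, hq, hpq⟩ := ((Nat.Prime.prime hp).dvd_finset_prod_iff id).mp hdvd
      have hq' := Finset.mem_filter.mp hq
      have : p = q :=
        (Nat.prime_dvd_prime_iff_eq hp (Nat.prime_of_mem_primeFactors hq'.1)).mp hpq
      exact hq'.2 (this ▸ hpb)
    have hka : (p : ℤ) ∣ (k : ℤ) * a := by
      have := hpsum.sub hpb
      simpa using this
    rcases hppz.dvd_mul.mp hka with h | hpa
    · exact hpk (Int.natCast_dvd_natCast.mp h)
    · have : (p : ℤ) ∣ (Int.gcd a b : ℤ) := Int.dvd_coe_gcd hpa hpb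
      rw [hab] at this
      exact hp.one_lt.ne' (Nat.eq_one_of_dvd_one (by exact_mod_cast this))
  · have hpk : p ∣ k := by
      rw [hk]
      exact Finset.dvd_prod_of_mem id
        (Finset.mem_filter.mpr ⟨Nat.mem_primeFactors.mpr ⟨hp, hpm, hm⟩, hpb⟩)
    have hka : (p : ℤ) ∣ (k : ℤ) * a := Dvd.dvd.mul_right (Int.natCast_dvd_natCast.mpr hpk) a
    have : (p : ℤ) ∣ b := by
      have := hpsum.sub hka
      simpa using this
    exact hpb this

/-- For any `a b`, some `u*a+b` has the right gcd with `m`. -/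
lemma key_gcd (m : ℕ) (hm : m ≠ 0) (a b : ℤ) :
    ∃ u : ℤ, Int.gcd (u * a + b) m = Int.gcd (Int.gcd a b : ℤ) m := by
  by_cases hd : Int.gcd a b = 0
  · obtain ⟨ha, hb⟩ := Int.gcd_eq_zero_iff.mp hd
    exact ⟨0, by simp [ha, hb, hd]⟩
  · have hdpos : 0 < Int.gcd a b := Nat.pos_of_ne_zero hd
    set d : ℕ := Int.gcd a b with hdd
    have hda : (d : ℤ) ∣ a := Int.gcd_dvd_left a b
    have hdb : (d : ℤ) ∣ b := Int.gcd_dvd_right a b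
    set a' : ℤ := a / (d : ℤ) with ha'
    set b' : ℤ := b / (d : ℤ) with hb'
    have ha : a = (d : ℤ) * a' := (Int.mul_ediv_cancel' hda).symm
    have hb : b = (d : ℤ) * b' := (Int.mul_ediv_cancel' hdb).symm
    have hab' : Int.gcd a' b' = 1 := Int.gcd_div_gcd_div_gcd hdpos
    obtain ⟨u, hu⟩ := key_coprime m hm a' b' hab'
    refine ⟨u, ?_⟩
    have hrw : u * a + b = (d : ℤ) * (u * a' + b') := by rw [ha, hb]; ring
    rw [hrw]
    have hc : Nat.Coprime (u * a' + b').natAbs m := hu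
    calc Int.gcd ((d : ℤ) * (u * a' + b')) m
        = Nat.gcd (d * (u * a' + b').natAbs) m := by
          simp [Int.gcd, Int.natAbs_mul]
      _ = Nat.gcd d m := Nat.Coprime.gcd_mul_right_cancel d hc
      _ = Int.gcd ((d : ℤ)) m := by simp [Int.gcd]
      _ = Int.gcd (Int.gcd a b : ℤ) m := by rw [← hdd]

lemma gcd_univ_succ (n : ℕ) (z : Fin (n + 1) → ℤ) :
    Finset.univ.gcd z = GCDMonoid.gcd (z 0) (Finset.univ.gcd (z ∘ Fin.succ)) := by
  classical
  rw [Fin.univ_succ, Finset.cons_eq_insert, Finset.gcd_insert]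
  congr 1
  rw [Finset.gcd, Finset.gcd, Finset.fold_map]
  rfl

theorem stmt_10 (s : ℕ) (z : Fin (s + 1) → ℤ) (m : ℕ) (hm : 0 < m) :
    ∃ u : Fin s → ℤ,
      Int.gcd ((∑ i : Fin s, u i * z i.castSucc) + z (Fin.last s)) m
        = Int.gcd (Finset.univ.gcd z) m := by
  induction s with
  | zero =>
      refine ⟨fun i => 0, ?_⟩
      simp [Finset.gcd_singleton, ← Int.abs_eq_normalize, Int.gcd, Int.natAbs_abs]
  | succ s ih =>
      obtain ⟨u, hu⟩ := ih (z ∘ Fin.succ)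
      obtain ⟨u₀, hu₀⟩ := key_gcd m hm.ne' (z 0)
        ((∑ i : Fin s, u i * (z ∘ Fin.succ) i.castSucc) + (z ∘ Fin.succ) (Fin.last s))
      refine ⟨Fin.cases u₀ u, ?_⟩
      have hsum : (∑ i : Fin (s + 1), (Fin.cases u₀ u : Fin (s+1) → ℤ) i * z i.castSucc)
          + z (Fin.last (s + 1))
          = u₀ * z 0 + ((∑ i : Fin s, u i * (z ∘ Fin.succ) i.castSucc)
              + (z ∘ Fin.succ) (Fin.last s)) := by
        rw [Fin.sum_univ_succ]
        simp only [Fin.cases_zero, Fin.cases_succ, Function.comp_apply, Fin.succ_last, Fin.castSucc_zero]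
        have : ∀ i : Fin s, z (Fin.castSucc (Fin.succ i)) = z (Fin.succ (Fin.castSucc i)) := by
          intro i; rw [Fin.succ_castSucc]
        simp only [this]
        ring
      rw [hsum, hu₀, gcd_univ_succ]
      -- now reduce both sides to Nat.gcd computations
      set B := (∑ i : Fin s, u i * (z ∘ Fin.succ) i.castSucc) + (z ∘ Fin.succ) (Fin.last s)
      set G := Finset.univ.gcd (z ∘ Fin.succ)
      have h1 : Int.gcd (Int.gcd (z 0) B : ℤ) m = Nat.gcd (z 0).natAbs (Int.gcd B m) := by
        simp [Int.gcd, Nat.gcd_assoc]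
      have h2 : Int.gcd (GCDMonoid.gcd (z 0) G) m = Nat.gcd (z 0).natAbs (Int.gcd G m) := by
        rw [← Int.coe_gcd]
        simp [Int.gcd, Nat.gcd_assoc]
      rw [h1, h2, hu]
end

section
/- Let m be a positive integer, u₀ an integer, and m' the product of all primes p ≤ S dividing m, where S > log₂ m. If for every prime p ≤ S dividing m we have p ∤ (u₀·z₁ + z₂), and z₁, z₂ are integers with gcd(z₁,z₂,m)=1, then among u_t = u₀ + t·m' for t = 0, 1, ..., S−1, at least one u_t satisfies gcd(u_t·z₁ + z₂, m) = 1. -/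
theorem stmt_11 (m S : ℕ) (hm : 0 < m) (hS : m < 2 ^ S)
    (z₁ z₂ : ℤ) (hz : Int.gcd (Int.gcd z₁ z₂) m = 1) (u₀ : ℤ)
    (m' : ℕ)
    (hm' : m' = ∏ p ∈ (Finset.range (S + 1)).filter (fun p => p.Prime ∧ p ∣ m), p)
    (h : ∀ p : ℕ, p.Prime → p ∣ m → p ≤ S → ¬ ((p : ℤ) ∣ (u₀ * z₁ + z₂))) :
    ∃ t : ℕ, t < S ∧ Int.gcd ((u₀ + t * m') * z₁ + z₂) m = 1 := by
  by_contra hcon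
  push_neg at hcon
  have hS1 : 1 ≤ S := by
    rcases Nat.eq_zero_or_pos S with h0 | h0
    · subst h0; simp at hS; omega
    · exact h0
  -- for each t < S, produce a big prime dividing m and the value
  have key : ∀ t : Fin S, ∃ p : ℕ, p.Prime ∧ p ∣ m ∧ S < p ∧
      (p : ℤ) ∣ ((u₀ + (t : ℕ) * (m' : ℤ)) * z₁ + z₂) := by
    intro t
    set a : ℤ := (u₀ + (t : ℕ) * (m' : ℤ)) * z₁ + z₂ with ha
    have hg := hcon (t : ℕ) t.2
    obtain ⟨p, hp, hpg⟩ := Nat.exists_prime_and_dvd hg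
    have hgm : Int.gcd a m ∣ m := by
      have h1 : ((Int.gcd a m : ℕ) : ℤ) ∣ (m : ℤ) := Int.gcd_dvd_right _ _
      exact_mod_cast h1
    have hpm : p ∣ m := hpg.trans hgm
    have hpa : (p : ℤ) ∣ a := by
      have h1 : (Int.gcd a m : ℤ) ∣ a := (Int.gcd_dvd_left a m : _ ∣ a)
      exact dvd_trans (by exact_mod_cast hpg) h1
    refine ⟨p, hp, hpm, ?_, hpa⟩
    by_contra hps
    push_neg at hps
    have hpm' : (p : ℤ) ∣ (m' : ℤ) := by
      have : p ∣ m' := by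
        rw [hm']
        exact Finset.dvd_prod_of_mem _ (by
          simp only [Finset.mem_filter, Finset.mem_range]
          exact ⟨by omega, hp, hpm⟩)
      exact_mod_cast this
    have : (p : ℤ) ∣ u₀ * z₁ + z₂ := by
      have h2 : (p : ℤ) ∣ ((t : ℕ) * (m' : ℤ)) * z₁ := by
        exact Dvd.dvd.mul_right (Dvd.dvd.mul_left hpm' _) _
      have h3 : u₀ * z₁ + z₂ = a - ((t : ℕ) * (m' : ℤ)) * z₁ := by ring
      rw [h3]; exact dvd_sub hpa h2
    exact h p hp hpm hps this
  choose f hf1 hf2 hf3 hf4 using key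
  -- f is injective
  have hinj : Function.Injective f := by
    intro t t' heq
    set p := f t with hpdef
    have hppZ : Prime (p : ℤ) := Int.prime_iff_natAbs_prime.mpr (by simpa using hf1 t)
    have hd : (p : ℤ) ∣ (((t : ℕ) : ℤ) - ((t' : ℕ) : ℤ)) * (m' : ℤ) * z₁ := by
      have h1 := hf4 t
      have h2 := hf4 t'
      rw [← heq] at h2
      have h3 : (((t : ℕ) : ℤ) - ((t' : ℕ) : ℤ)) * (m' : ℤ) * z₁ =
          ((u₀ + (t : ℕ) * (m' : ℤ)) * z₁ + z₂) - ((u₀ + (t' : ℕ) * (m' : ℤ)) * z₁ + z₂) := by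
        ring
      rw [h3]; exact dvd_sub h1 h2
    have hpnm' : ¬ (p : ℤ) ∣ (m' : ℤ) := by
      intro hc
      have hc' : p ∣ m' := by exact_mod_cast hc
      rw [hm'] at hc'
      obtain ⟨q, hq, hpq⟩ := (Prime.dvd_finset_prod_iff (hf1 t).prime _).mp hc'
      simp only [Finset.mem_filter, Finset.mem_range] at hq
      have hpq2 : p = q := ((Nat.prime_dvd_prime_iff_eq (hf1 t) hq.2.1).mp hpq)
      have hSp := hf3 t
      omega
    have hpnz₁ : ¬ (p : ℤ) ∣ z₁ := by
      intro hc
      have hz₂ : (p : ℤ) ∣ z₂ := by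
        have h1 := hf4 t
        have h3 : z₂ = ((u₀ + (t : ℕ) * (m' : ℤ)) * z₁ + z₂) - (u₀ + (t : ℕ) * (m' : ℤ)) * z₁ := by
          ring
        rw [h3]; exact dvd_sub h1 (Dvd.dvd.mul_left hc _)
      have hpg : p ∣ Int.gcd z₁ z₂ := by
        have := Int.dvd_gcd hc hz₂
        exact_mod_cast this
      have hpG : p ∣ Int.gcd (Int.gcd z₁ z₂ : ℤ) (m : ℤ) := by
        rw [Int.gcd_natCast_natCast]
        exact Nat.dvd_gcd hpg (hf2 t)
      rw [hz] at hpG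
      exact Nat.Prime.one_lt (hf1 t) |>.ne' (Nat.dvd_one.mp hpG)
    have hdt : (p : ℤ) ∣ (((t : ℕ) : ℤ) - ((t' : ℕ) : ℤ)) := by
      rcases hppZ.dvd_mul.mp hd with h1 | h1
      · rcases hppZ.dvd_mul.mp h1 with h2 | h2
        · exact h2
        · exact absurd h2 hpnm'
      · exact absurd h1 hpnz₁
    have : p ∣ (((t : ℕ) : ℤ) - ((t' : ℕ) : ℤ)).natAbs := by
      rwa [Int.natCast_dvd] at hdt
    have hlt : ((((t : ℕ) : ℤ) - ((t' : ℕ) : ℤ)).natAbs) < p := by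
      have ht1 := t.2
      have ht2 := t'.2
      have hSp := hf3 t
      omega
    have h0 : (((t : ℕ) : ℤ) - ((t' : ℕ) : ℤ)).natAbs = 0 := Nat.eq_zero_of_dvd_of_lt this hlt
    have : (t : ℕ) = (t' : ℕ) := by omega
    exact Fin.ext this
  -- count the big primes
  set P : Finset ℕ := m.primeFactors.filter (fun p => S < p) with hP
  have hmem : ∀ t : Fin S, f t ∈ P := by
    intro t
    simp only [hP, Finset.mem_filter, Nat.mem_primeFactors]
    exact ⟨⟨hf1 t, hf2 t, hm.ne'⟩, hf3 t⟩
  have hcard : S ≤ P.card := by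
    have := Fintype.card_le_of_injective (fun t => (⟨f t, hmem t⟩ : {x // x ∈ P}))
      (fun a b hab => hinj (Subtype.ext_iff.mp hab))
    simpa using this
  have hprod_dvd : ∏ p ∈ P, p ∣ m := by
    refine Finset.prod_primes_dvd m ?_ ?_
    · intro p hp
      simp only [hP, Finset.mem_filter, Nat.mem_primeFactors] at hp
      exact hp.1.1.prime
    · intro p hp
      simp only [hP, Finset.mem_filter, Nat.mem_primeFactors] at hp
      exact hp.1.2.1
  have hprod_le : ∏ p ∈ P, p ≤ m := Nat.le_of_dvd hm hprod_dvd
  have hlow : (S + 1) ^ P.card ≤ ∏ p ∈ P, p := by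
    refine Finset.pow_card_le_prod P _ _ ?_
    intro p hp
    simp only [hP, Finset.mem_filter] at hp
    omega
  have h1 : 2 ^ S ≤ (S + 1) ^ S := Nat.pow_le_pow_left (by omega) S
  have h2 : (S + 1) ^ S ≤ (S + 1) ^ P.card := Nat.pow_le_pow_right (by omega) hcard
  omega
end
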